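/- Let A, B, C, D ∈ ℂ with C ≠ 0, and suppose that either (i) A ≠ 1 and D = conj(B)·(1 − A)·(1 − conj(A))^{−1}, or (ii) A = 1 and |D| = |B|. Set ψ(z) = C·e^{Dz}, φ(z) = Az + B, ψ̂(z) = conj(C)·e^{conj(B)·z}, φ̂(z) = conj(A)·z + conj(D). Then for every entire function f : ℂ → ℂ, ∫_ℂ |ψ̂(z)·f(φ̂(z))|²·e^{−|z|²} dV(z) = ∫_ℂ |ψ(z)·f(φ(z))|²·e^{−|z|²} dV(z) (as an identity in [0,∞]). (This is the normality identity ‖W*f‖ = ‖Wf‖ with equal domains for the maximal weighted composition operator W = W_{ψ,φ,max}, whose adjoint is W_{ψ̂,φ̂,max}.) -/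

import Mathlib

open MeasureTheory Complex ComplexConjugate

/-!
The substitution `z = α w + β` with `|α| = 1` preserves Lebesgue measure. Under either condition
on `A, B, D` one can choose `α, β` with `φ̂ (α w + β) = φ w` and such that the Gaussian exponents
match: `2 Re (B̄ z) - |z|²` at `z = α w + β` equals `2 Re (D w) - |w|²`. As `|C̄| = |C|`, the two
integrands then agree pointwise after the substitution.
-/

theorem lintegral_comp_mul_add_of_norm_eq_one {α : ℂ} (hα : ‖α‖ = 1) (β : ℂ)
    (g : ℂ → ENNReal) : ∫⁻ w, g (α * w + β) = ∫⁻ z, g z := by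
  let c : Circle := ⟨α, (mem_sphere_zero_iff_norm.2 hα : α ∈ Metric.sphere (0 : ℂ) 1)⟩
  have hrot := (rotation c).measurePreserving.lintegral_comp_emb
    (rotation c).toHomeomorph.measurableEmbedding (fun z => g (z + β))
  rw [← lintegral_add_right_eq_self g β]
  exact hrot

theorem sq_norm_mul_exp_mul_mul_exp_neg_sq_norm (c b x z : ℂ) :
    ‖c * cexp (b * z) * x‖ ^ 2 * Real.exp (-‖z‖ ^ 2) =
      ‖c‖ ^ 2 * ‖x‖ ^ 2 * Real.exp (2 * (b * z).re - ‖z‖ ^ 2) := by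
  rw [norm_mul, norm_mul, norm_exp, sub_eq_add_neg, Real.exp_add,
    show (2 : ℝ) * (b * z).re = (2 : ℕ) * (b * z).re by norm_num, Real.exp_nat_mul]
  ring

theorem two_mul_re_mul_add_sub_sq_norm {α : ℂ} (hα : ‖α‖ = 1) (b β w : ℂ) :
    2 * (b * (α * w + β)).re - ‖α * w + β‖ ^ 2 =
      2 * ((b - conj β) * α * w).re - ‖w‖ ^ 2 + (2 * (b * β).re - ‖β‖ ^ 2) := by
  have hαw : ‖α * w‖ = ‖w‖ := by rw [norm_mul, hα, one_mul]
  rw [Complex.sq_norm, normSq_add, ← Complex.sq_norm, hαw, Complex.sq_norm, Complex.sq_norm]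
  simp only [mul_add, sub_mul, add_re, sub_re]
  rw [show conj β * α * w = α * w * conj β by ring, mul_assoc b α w]
  ring

theorem two_mul_re_mul_eq_sq_norm {b β : ℂ} (h : b * β + conj b * conj β = β * conj β) :
    2 * (b * β).re = ‖β‖ ^ 2 := by
  apply ofReal_injective
  rw [← add_conj, ofReal_pow, ← mul_conj', map_mul, h]

/-- The last two fields turn the right side of `two_mul_re_mul_add_sub_sq_norm` (with `b = B̄`)
into `2 Re (D w) - |w|²`. -/
structure IsIntertwiningMotion (A B D α β : ℂ) : Prop where
  norm_eq_one : ‖α‖ = 1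
  comp_eq : ∀ w, conj A * (α * w + β) + conj D = A * w + B
  linear_coeff_eq : (conj B - conj β) * α = D
  two_mul_re_eq : 2 * (conj B * β).re = ‖β‖ ^ 2

theorem exists_isIntertwiningMotion_of_ne_one {A B D : ℂ} (hA : A ≠ 1)
    (hD : D = conj B * (1 - A) * (1 - conj A)⁻¹) :
    ∃ α β, IsIntertwiningMotion A B D α β := by
  have hconjD : conj D = B * (1 - conj A) * (1 - A)⁻¹ := by simp [hD]
  rcases eq_or_ne A 0 with rfl | hA0
  · exact ⟨1, 0, ⟨by simp, fun w => by simp [hconjD], by simp [hD], by simp⟩⟩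
  have hcA0 : conj A ≠ 0 := (map_ne_zero conj).2 hA0
  have h1A : 1 - A ≠ 0 := sub_ne_zero.2 hA.symm
  have h1cA : 1 - conj A ≠ 0 := sub_ne_zero.2 fun h => hA (by simpa using congrArg conj h.symm)
  refine ⟨A / conj A, (B - conj D) / conj A,
    ⟨?_, fun w => ?_, ?_, two_mul_re_mul_eq_sq_norm ?_⟩⟩
  · rw [norm_div, norm_conj, div_self (norm_ne_zero_iff.2 hA0)]
  · field_simp
    ring
  · rw [hconjD, hD]
    simp only [map_mul, map_div₀, map_sub, map_inv₀, map_one, conj_conj]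
    field_simp
    ring
  · rw [hconjD]
    simp only [map_mul, map_div₀, map_sub, map_inv₀, map_one, conj_conj]
    field_simp
    ring

theorem exists_isIntertwiningMotion_of_eq_one {A B D : ℂ} (hA : A = 1) (hD : ‖D‖ = ‖B‖) :
    ∃ α β, IsIntertwiningMotion A B D α β := by
  subst hA
  have hBD : B * conj B = D * conj D := by rw [mul_conj', mul_conj', hD]
  refine ⟨1, B - conj D, ⟨by simp, fun w => ?_, by simp, two_mul_re_mul_eq_sq_norm ?_⟩⟩
  · rw [map_one, one_mul, one_mul]
    ring
  · simp only [map_sub, conj_conj]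
    linear_combination hBD

theorem wco_normal_identity_general (A B C D : ℂ)
    (hcond : (A ≠ 1 ∧ D = conj B * (1 - A) * (1 - conj A)⁻¹) ∨
      (A = 1 ∧ ‖D‖ = ‖B‖))
    (ψ φ ψh φh : ℂ → ℂ)
    (hψ : ∀ z : ℂ, ψ z = C * Complex.exp (D * z))
    (hφ : ∀ z : ℂ, φ z = A * z + B)
    (hψh : ∀ z : ℂ, ψh z = conj C * Complex.exp (conj B * z))
    (hφh : ∀ z : ℂ, φh z = conj A * z + conj D) :
    ∀ f : ℂ → ℂ, Differentiable ℂ f →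
      ∫⁻ z : ℂ, ENNReal.ofReal
          ((‖ψh z * f (φh z)‖) ^ 2 * Real.exp (-(‖z‖) ^ 2)) =
        ∫⁻ z : ℂ, ENNReal.ofReal
          ((‖ψ z * f (φ z)‖) ^ 2 * Real.exp (-(‖z‖) ^ 2)) := by
  intro f _
  obtain ⟨α, β, hT⟩ : ∃ α β, IsIntertwiningMotion A B D α β := by
    rcases hcond with ⟨hA, hD⟩ | ⟨hA, hD⟩
    · exact exists_isIntertwiningMotion_of_ne_one hA hD
    · exact exists_isIntertwiningMotion_of_eq_one hA hD
  rw [← lintegral_comp_mul_add_of_norm_eq_one hT.norm_eq_one β]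
  refine lintegral_congr fun w => congrArg ENNReal.ofReal ?_
  rw [hψh, hφh, hψ, hφ, hT.comp_eq, sq_norm_mul_exp_mul_mul_exp_neg_sq_norm,
    sq_norm_mul_exp_mul_mul_exp_neg_sq_norm, two_mul_re_mul_add_sub_sq_norm hT.norm_eq_one,
    hT.linear_coeff_eq, hT.two_mul_re_eq, sub_self, add_zero, norm_conj]

/-- the normality identity `‖W* f‖ = ‖W f‖` (as integrals in `[0,∞]`)
under condition (i) `A ≠ 1` and `D = B̄(1-A)(1-Ā)⁻¹`, or (ii) `A = 1` and `|D| = |B|`. -/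
theorem wco_normal_identity (A B C D : ℂ) (hC : C ≠ 0)
    (hcond : (A ≠ 1 ∧ D = conj B * (1 - A) * (1 - conj A)⁻¹) ∨
      (A = 1 ∧ ‖D‖ = ‖B‖))
    (ψ φ ψh φh : ℂ → ℂ)
    (hψ : ∀ z : ℂ, ψ z = C * Complex.exp (D * z))
    (hφ : ∀ z : ℂ, φ z = A * z + B)
    (hψh : ∀ z : ℂ, ψh z = conj C * Complex.exp (conj B * z))
    (hφh : ∀ z : ℂ, φh z = conj A * z + conj D) :
    ∀ f : ℂ → ℂ, Differentiable ℂ f →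
      ∫⁻ z : ℂ, ENNReal.ofReal
          ((‖ψh z * f (φh z)‖) ^ 2 * Real.exp (-(‖z‖) ^ 2)) =
        ∫⁻ z : ℂ, ENNReal.ofReal
          ((‖ψ z * f (φ z)‖) ^ 2 * Real.exp (-(‖z‖) ^ 2)) :=
  wco_normal_identity_general A B C D hcond ψ φ ψh φh hψ hφ hψh hφh
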